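/- arXiv:2409.17401 — 4 statements merged into one kernel-verified Lean document; each statement's English description precedes it below -/
import Mathlib

section
/- Let H > 0, L > 0, Δ ∈ (0, 1/2), and let M be a positive integer. Let f : [Δ, 1−Δ] → ℝ be L-Lipschitz on [Δ, 1−Δ] with |f(x)| ≤ H for all x ∈ [Δ, 1−Δ]. Let r ∈ [−H, H] and p ∈ [Δ, 1−Δ] satisfy f(p) = r. Let o_1, …, o_M be independent {0,1}-valued random variables each with mean p, let ō = (1/M)·Σ_{m=1}^M o_m, and let p̂ = trim[ō|Δ]. Then E|f(p̂) − r| ≤ L·√(2·log M / M) + 2H/M². -/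
open MeasureTheory ProbabilityTheory

noncomputable section

/-- The trim operator: `trim Δ a = min (max a Δ) (1 - Δ)`. -/
def trim (Δ a : ℝ) : ℝ := min (max a Δ) (1 - Δ)

lemma hoeffding_bernoulli {p : ℝ} (hp0 : 0 ≤ p) (hp1 : p ≤ 1) (l : ℝ) :
    (1 - p) + p * Real.exp l ≤ Real.exp (p * l + l ^ 2 / 8) := by
  set D : ℝ → ℝ := fun x => 1 - p + p * Real.exp x with hD
  have hDpos : ∀ x, 0 < D x := by
    intro x
    rcases hp0.lt_or_eq with h | h
    · have := Real.exp_pos x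
      have : 0 < p * Real.exp x := mul_pos h this
      simp only [hD]; linarith [sub_nonneg.mpr hp1]
    · simp only [hD, ← h]; norm_num
  set φ : ℝ → ℝ := fun x => Real.log (D x) - (p * x + x ^ 2 / 8) with hφ
  set h : ℝ → ℝ := fun x => p * Real.exp x / D x - (p + x / 4) with hh
  have hDderiv : ∀ x, HasDerivAt D (p * Real.exp x) x := by
    intro x
    exact ((Real.hasDerivAt_exp x).const_mul p).const_add (1 - p)
  have hφderiv : ∀ x, HasDerivAt φ (h x) x := by
    intro x
    have h1 : HasDerivAt (fun x => Real.log (D x)) (p * Real.exp x / D x) x :=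
      (hDderiv x).log (hDpos x).ne'
    have h2 : HasDerivAt (fun x : ℝ => p * x + x ^ 2 / 8) (p + x / 4) x := by
      have := ((hasDerivAt_pow 2 x).div_const 8).const_add (p * x)
      have h3 : HasDerivAt (fun x : ℝ => p * x) p x := by
        simpa using (hasDerivAt_id x).const_mul p
      have := h3.add ((hasDerivAt_pow 2 x).div_const 8)
      refine this.congr_deriv ?_
      norm_num
      ring
    exact h1.sub h2
  have hhderiv : ∀ x, HasDerivAt h (p * (1 - p) * Real.exp x / (D x) ^ 2 - 1 / 4) x := by
    intro x
    have hu : HasDerivAt (fun x => p * Real.exp x) (p * Real.exp x) x :=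
      (Real.hasDerivAt_exp x).const_mul p
    have hq : HasDerivAt (fun x => p * Real.exp x / D x)
        ((p * Real.exp x * D x - p * Real.exp x * (p * Real.exp x)) / (D x) ^ 2) x :=
      hu.div (hDderiv x) (hDpos x).ne'
    have h2 : HasDerivAt (fun x : ℝ => p + x / 4) (1 / 4) x := by
      simpa using ((hasDerivAt_id x).div_const 4).const_add p
    have := hq.sub h2
    refine this.congr_deriv (Eq.symm ?_)
    show p * (1 - p) * Real.exp x / (1 - p + p * Real.exp x) ^ 2 - 1 / 4 = (p * Real.exp x * (1 - p + p * Real.exp x) - p * Real.exp x * (p * Real.exp x)) / (1 - p + p * Real.exp x) ^ 2 - 1 / 4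
    have hne : (1 - p + p * Real.exp x) ≠ 0 := (hDpos x).ne'
    field_simp
    ring
  have hhanti : Antitone h := by
    apply antitone_of_deriv_nonpos (fun x => (hhderiv x).differentiableAt)
    intro x
    rw [(hhderiv x).deriv]
    have hD2 : 0 < (D x) ^ 2 := pow_pos (hDpos x) 2
    rw [sub_nonpos, div_le_iff₀ hD2]
    show p * (1 - p) * Real.exp x ≤ 1 / 4 * (1 - p + p * Real.exp x) ^ 2
    nlinarith [sq_nonneg ((1 - p) - p * Real.exp x)]
  have hh0 : h 0 = 0 := by
    simp only [hh]
    rw [Real.exp_zero]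
    have : D 0 = 1 := by simp [hD]
    rw [this]
    ring
  have hφ0 : φ 0 = 0 := by
    have : D 0 = 1 := by simp [hD]
    simp [hφ, this]
  have hφdiff : Differentiable ℝ φ := fun x => (hφderiv x).differentiableAt
  have hφle : ∀ x, φ x ≤ 0 := by
    intro x
    rcases le_total 0 x with hx | hx
    · have : AntitoneOn φ (Set.Ici 0) := by
        apply antitoneOn_of_deriv_nonpos (convex_Ici 0) hφdiff.continuous.continuousOn
          hφdiff.differentiableOn
        intro y hy
        rw [(hφderiv y).deriv]
        rw [interior_Ici] at hy
        have := hhanti (le_of_lt hy)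
        rw [hh0] at this
        exact this
      calc φ x ≤ φ 0 := this (Set.mem_Ici.mpr le_rfl) (Set.mem_Ici.mpr hx) hx
        _ = 0 := hφ0
    · have : MonotoneOn φ (Set.Iic 0) := by
        apply monotoneOn_of_deriv_nonneg (convex_Iic 0) hφdiff.continuous.continuousOn
          hφdiff.differentiableOn
        intro y hy
        rw [(hφderiv y).deriv]
        rw [interior_Iic] at hy
        have := hhanti (le_of_lt hy)
        rw [hh0] at this
        exact this
      calc φ x ≤ φ 0 := this (Set.mem_Iic.mpr hx) (Set.mem_Iic.mpr le_rfl) hx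
        _ = 0 := hφ0
  have := hφle l
  have hlog : Real.log (D l) ≤ p * l + l ^ 2 / 8 := by
    simp only [hφ] at this
    linarith
  calc (1 - p) + p * Real.exp l = D l := rfl
    _ = Real.exp (Real.log (D l)) := (Real.exp_log (hDpos l)).symm
    _ ≤ Real.exp (p * l + l ^ 2 / 8) := Real.exp_le_exp.mpr hlog

lemma bernoulli_sum_tail {Ω : Type*} [MeasurableSpace Ω] (P : Measure Ω)
    [IsProbabilityMeasure P] (M : ℕ) (p t : ℝ) (hp0 : 0 ≤ p) (hp1 : p ≤ 1) (ht : 0 ≤ t)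
    (o : Fin M → Ω → ℝ)
    (ho_meas : ∀ m, Measurable (o m))
    (ho_01 : ∀ m, ∀ᵐ ω ∂P, o m ω = 0 ∨ o m ω = 1)
    (ho_mean : ∀ m, ∫ ω, o m ω ∂P = p)
    (ho_indep : iIndepFun o P) :
    (P {ω | (M : ℝ) * (p + t) ≤ ∑ m, o m ω}).toReal ≤ Real.exp (-(2 * M * t ^ 2)) ∧
    (P {ω | ∑ m, o m ω ≤ (M : ℝ) * (p - t)}).toReal ≤ Real.exp (-(2 * M * t ^ 2)) := by
  have hint : ∀ (l : ℝ) m, Integrable (fun ω => Real.exp (l * o m ω)) P := by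
    intro l m
    refine ⟨(((ho_meas m).const_mul l).exp).aestronglyMeasurable, ?_⟩
    apply HasFiniteIntegral.of_bounded (C := max 1 (Real.exp l))
    filter_upwards [ho_01 m] with ω hω
    rcases hω with h | h <;> simp [h, Real.norm_eq_abs, abs_of_pos (Real.exp_pos _)]
  have ho_int : ∀ m, Integrable (o m) P := by
    intro m
    refine ⟨(ho_meas m).aestronglyMeasurable, ?_⟩
    apply HasFiniteIntegral.of_bounded (C := 1)
    filter_upwards [ho_01 m] with ω hω
    rcases hω with h | h <;> simp [h]
  have hmgf : ∀ (l : ℝ) m, mgf (o m) P l = 1 - p + p * Real.exp l := by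
    intro l m
    have hcong : (fun ω => Real.exp (l * o m ω)) =ᵐ[P]
        (fun ω => 1 + (Real.exp l - 1) * o m ω) := by
      filter_upwards [ho_01 m] with ω hω
      rcases hω with h | h <;> simp [h]
    rw [mgf, integral_congr_ae hcong, integral_add (integrable_const 1)
      ((ho_int m).const_mul _), integral_const, integral_const_mul, ho_mean m]
    simp; ring
  have hmgfS : ∀ l : ℝ, mgf (∑ m, o m) P l = (1 - p + p * Real.exp l) ^ M := by
    intro l
    rw [ho_indep.mgf_sum ho_meas Finset.univ]
    simp [hmgf l]
  have hSint : ∀ l : ℝ, Integrable (fun ω => Real.exp (l * (∑ m, o m) ω)) P := by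
    intro l
    exact ho_indep.integrable_exp_mul_sum ho_meas (fun m _ => hint l m)
  have hDpow : ∀ l : ℝ, (1 - p + p * Real.exp l) ^ M ≤ Real.exp (M * (p * l + l ^ 2 / 8)) := by
    intro l
    rw [mul_comm (M : ℝ), Real.exp_mul, ← Real.rpow_natCast (1 - p + p * Real.exp l) M]
    apply Real.rpow_le_rpow ?_ (hoeffding_bernoulli hp0 hp1 l) (Nat.cast_nonneg M)
    have := Real.exp_pos l
    nlinarith
  constructor
  · have h1 := measure_ge_le_exp_mul_mgf (X := ∑ m, o m) (μ := P) ((M : ℝ) * (p + t))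
      (by positivity : (0:ℝ) ≤ 4 * t) (hSint (4 * t))
    have hset : {ω | (M : ℝ) * (p + t) ≤ (∑ m, o m) ω} =
        {ω | (M : ℝ) * (p + t) ≤ ∑ m, o m ω} := by
      ext ω; simp [Finset.sum_apply]
    rw [hset] at h1
    refine h1.trans ?_
    calc Real.exp (-(4 * t) * ((M : ℝ) * (p + t))) * mgf (∑ m, o m) P (4 * t)
        ≤ Real.exp (-(4 * t) * ((M : ℝ) * (p + t))) *
            Real.exp ((M : ℝ) * (p * (4 * t) + (4 * t) ^ 2 / 8)) := by
          apply mul_le_mul_of_nonneg_left _ (Real.exp_pos _).le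
          rw [hmgfS]; exact hDpow (4 * t)
      _ = Real.exp (-(4 * t) * ((M : ℝ) * (p + t)) + (M : ℝ) * (p * (4 * t) + (4 * t) ^ 2 / 8)) :=
          (Real.exp_add _ _).symm
      _ = Real.exp (-(2 * M * t ^ 2)) := by congr 1; ring
  · have h1 := measure_le_le_exp_mul_mgf (X := ∑ m, o m) (μ := P) ((M : ℝ) * (p - t))
      (by linarith : -(4 * t) ≤ 0) (hSint (-(4 * t)))
    have hset : {ω | (∑ m, o m) ω ≤ (M : ℝ) * (p - t)} =
        {ω | ∑ m, o m ω ≤ (M : ℝ) * (p - t)} := by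
      ext ω; simp [Finset.sum_apply]
    rw [hset] at h1
    refine h1.trans ?_
    calc Real.exp (-(-(4 * t)) * ((M : ℝ) * (p - t))) * mgf (∑ m, o m) P (-(4 * t))
        ≤ Real.exp (-(-(4 * t)) * ((M : ℝ) * (p - t))) *
            Real.exp ((M : ℝ) * (p * (-(4 * t)) + (-(4 * t)) ^ 2 / 8)) := by
          apply mul_le_mul_of_nonneg_left _ (Real.exp_pos _).le
          rw [hmgfS]; exact hDpow (-(4 * t))
      _ = Real.exp (-(-(4 * t)) * ((M : ℝ) * (p - t)) +
            (M : ℝ) * (p * (-(4 * t)) + (-(4 * t)) ^ 2 / 8)) := (Real.exp_add _ _).symm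
      _ = Real.exp (-(2 * M * t ^ 2)) := by congr 1; ring

/-- First inequality of the concentration-of-reward-difference lemma (Lemma A.1):
with `f` (playing the role of `σ⁻¹`) `L`-Lipschitz and bounded by `H` on `[Δ, 1−Δ]`,
`r = f(p)`, and `p̂` the trimmed empirical mean of `M` i.i.d. `{0,1}`-valued
preferences of mean `p`, we have `E|f(p̂) − r| ≤ L·√(2 log M / M) + 2H/M²`. -/
theorem reward_difference_concentration_L1
    {Ω : Type*} [MeasurableSpace Ω] (P : Measure Ω) [IsProbabilityMeasure P]
    (H L Δ : ℝ) (hH : 0 < H) (hL : 0 < L) (hΔ0 : 0 < Δ) (hΔ : Δ < 1 / 2)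
    (M : ℕ) (hM : 0 < M)
    (f : ℝ → ℝ)
    (hf_lip : ∀ x ∈ Set.Icc Δ (1 - Δ), ∀ y ∈ Set.Icc Δ (1 - Δ),
      |f x - f y| ≤ L * |x - y|)
    (hf_bdd : ∀ x ∈ Set.Icc Δ (1 - Δ), |f x| ≤ H)
    (r p : ℝ) (hr : r ∈ Set.Icc (-H) H) (hp : p ∈ Set.Icc Δ (1 - Δ)) (hfp : f p = r)
    (o : Fin M → Ω → ℝ)
    (ho_meas : ∀ m, Measurable (o m))
    (ho_01 : ∀ m, ∀ᵐ ω ∂P, o m ω = 0 ∨ o m ω = 1)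
    (ho_mean : ∀ m, ∫ ω, o m ω ∂P = p)
    (ho_indep : iIndepFun o P) :
    ∫ ω, |f (trim Δ ((M : ℝ)⁻¹ * ∑ m, o m ω)) - r| ∂P ≤
      L * Real.sqrt (2 * Real.log M / M) + 2 * H / M ^ 2 := by
  have hMpos : (0 : ℝ) < M := Nat.cast_pos.mpr hM
  have hΔΔ : Δ ≤ 1 - Δ := by linarith
  set t : ℝ := Real.sqrt (2 * Real.log M / M) with hts
  have ht0 : 0 ≤ t := Real.sqrt_nonneg _
  have htrim_mem : ∀ a, trim Δ a ∈ Set.Icc Δ (1 - Δ) := by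
    intro a
    constructor
    · exact le_min (le_max_right a Δ) hΔΔ
    · exact min_le_right _ _
  have htrim_lip : ∀ a b, |trim Δ a - trim Δ b| ≤ |a - b| := by
    intro a b
    refine (abs_min_sub_min_le_max _ _ _ _).trans ?_
    apply max_le ((abs_max_sub_max_le_abs a b Δ))
    simp [abs_nonneg]
  have htrimp : trim Δ p = p := by
    rw [trim, max_eq_left hp.1, min_eq_left hp.2]
  set X : Ω → ℝ := fun ω => (M : ℝ)⁻¹ * ∑ m, o m ω with hX
  have hX_meas : Measurable X :=
    (Finset.measurable_sum Finset.univ (fun m _ => ho_meas m)).const_mul _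
  set g : Ω → ℝ := fun ω => |f (trim Δ (X ω)) - r| with hg
  have hF_meas : Measurable fun x => f (trim Δ x) := by
    have : LipschitzWith (Real.toNNReal L) fun x => f (trim Δ x) := by
      apply LipschitzWith.of_dist_le_mul
      intro a b
      rw [Real.dist_eq, Real.dist_eq, Real.coe_toNNReal _ hL.le]
      exact (hf_lip _ (htrim_mem a) _ (htrim_mem b)).trans
        (mul_le_mul_of_nonneg_left (htrim_lip a b) hL.le)
    exact this.continuous.measurable
  have hg_meas : Measurable g := ((hF_meas.comp hX_meas).sub measurable_const).abs
  have hrabs : |r| ≤ H := abs_le.mpr ⟨hr.1, hr.2⟩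
  have hg_bdd : ∀ ω, g ω ≤ 2 * H := by
    intro ω
    have h1 := hf_bdd _ (htrim_mem (X ω))
    calc g ω ≤ |f (trim Δ (X ω))| + |r| := abs_sub _ _
      _ ≤ 2 * H := by linarith
  have hg_int : Integrable g P := by
    refine ⟨hg_meas.aestronglyMeasurable, ?_⟩
    apply HasFiniteIntegral.of_bounded (C := 2 * H)
    filter_upwards with ω
    rw [Real.norm_eq_abs, abs_of_nonneg (abs_nonneg _)]
    exact hg_bdd ω
  show ∫ ω, g ω ∂P ≤ L * t + 2 * H / M ^ 2
  rcases lt_or_ge M 2 with hM2 | hM2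
  · -- M = 1
    have hM1 : M = 1 := by omega
    have h1 : ∫ ω, g ω ∂P ≤ ∫ _ω, 2 * H ∂P :=
      integral_mono hg_int (integrable_const _) hg_bdd
    rw [integral_const, probReal_univ] at h1
    simp only [ENNReal.toReal_one, smul_eq_mul, one_mul] at h1
    have ht1 : t = 0 := by
      rw [hts, hM1]; simp
    rw [ht1, hM1]
    norm_num
    linarith
  · have hMR2 : (2 : ℝ) ≤ M := by exact_mod_cast hM2
    have hlogM : 0 ≤ Real.log M := Real.log_nonneg (by linarith)
    have ht2 : t ^ 2 = 2 * Real.log M / M := by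
      rw [hts, Real.sq_sqrt (by positivity)]
    set B : Set Ω := {ω | t < |X ω - p|} with hB
    have hB_meas : MeasurableSet B :=
      measurableSet_lt measurable_const ((hX_meas.sub measurable_const).abs)
    have hptw : ∀ ω, g ω ≤ L * t + B.indicator (fun _ => 2 * H) ω := by
      intro ω
      by_cases hω : ω ∈ B
      · rw [Set.indicator_of_mem hω]
        have := hg_bdd ω
        have hLt : 0 ≤ L * t := by positivity
        linarith
      · rw [Set.indicator_of_notMem hω, add_zero]
        have hle : |X ω - p| ≤ t := not_lt.mp hω
        have : g ω ≤ L * |X ω - p| := by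
          rw [hg]
          have := hf_lip _ (htrim_mem (X ω)) _ hp
          rw [hfp] at this
          refine this.trans ?_
          apply mul_le_mul_of_nonneg_left _ hL.le
          calc |trim Δ (X ω) - p| = |trim Δ (X ω) - trim Δ p| := by rw [htrimp]
            _ ≤ |X ω - p| := htrim_lip _ _
        refine this.trans ?_
        exact mul_le_mul_of_nonneg_left hle hL.le
    have hI : ∫ ω, g ω ∂P ≤ L * t + 2 * H * (P B).toReal := by
      have hind : Integrable (fun ω => L * t + B.indicator (fun _ => 2 * H) ω) P :=
        (integrable_const _).add ((integrable_const _).indicator hB_meas)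
      calc ∫ ω, g ω ∂P ≤ ∫ ω, (L * t + B.indicator (fun _ => 2 * H) ω) ∂P :=
            integral_mono hg_int hind hptw
        _ = L * t + 2 * H * (P B).toReal := by
            rw [integral_add (integrable_const _) ((integrable_const _).indicator hB_meas),
              integral_const, probReal_univ, integral_indicator_const _ hB_meas]
            simp [mul_comm, measureReal_def]
    refine hI.trans ?_
    have hp0 : 0 ≤ p := le_trans hΔ0.le hp.1
    have hp1 : p ≤ 1 := le_trans hp.2 (by linarith)
    obtain ⟨hT1, hT2⟩ := bernoulli_sum_tail P M p t hp0 hp1 ht0 o ho_meas ho_01 ho_mean ho_indep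
    have hBsub : B ⊆ {ω | (M : ℝ) * (p + t) ≤ ∑ m, o m ω} ∪
        {ω | ∑ m, o m ω ≤ (M : ℝ) * (p - t)} := by
      intro ω hω
      have hω' : t < |X ω - p| := hω
      have hXω : X ω = (M : ℝ)⁻¹ * ∑ m, o m ω := rfl
      rcases lt_abs.mp hω' with h | h
      · left
        show (M : ℝ) * (p + t) ≤ ∑ m, o m ω
        have : p + t < X ω := by linarith
        rw [hXω] at this
        rw [← mul_le_mul_iff_right₀ (show (0:ℝ) < (M:ℝ)⁻¹ by positivity)]
        calc (M : ℝ)⁻¹ * ((M : ℝ) * (p + t)) = p + t := by field_simp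
          _ ≤ (M : ℝ)⁻¹ * ∑ m, o m ω := this.le
      · right
        show ∑ m, o m ω ≤ (M : ℝ) * (p - t)
        have : X ω < p - t := by linarith
        rw [hXω] at this
        rw [← mul_le_mul_iff_right₀ (show (0:ℝ) < (M:ℝ)⁻¹ by positivity)]
        calc (M : ℝ)⁻¹ * ∑ m, o m ω ≤ p - t := this.le
          _ = (M : ℝ)⁻¹ * ((M : ℝ) * (p - t)) := by field_simp
    have hPB : (P B).toReal ≤ 2 * Real.exp (-(2 * M * t ^ 2)) := by
      have h1 : P B ≤ P {ω | (M : ℝ) * (p + t) ≤ ∑ m, o m ω} +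
          P {ω | ∑ m, o m ω ≤ (M : ℝ) * (p - t)} :=
        (measure_mono hBsub).trans (measure_union_le _ _)
      have h2 : (P B).toReal ≤ (P {ω | (M : ℝ) * (p + t) ≤ ∑ m, o m ω}).toReal +
          (P {ω | ∑ m, o m ω ≤ (M : ℝ) * (p - t)}).toReal := by
        rw [← ENNReal.toReal_add (measure_ne_top _ _) (measure_ne_top _ _)]
        exact ENNReal.toReal_mono (by finiteness) h1
      linarith
    have hexp : Real.exp (-(2 * M * t ^ 2)) = ((M : ℝ) ^ 4)⁻¹ := by
      have : 2 * (M : ℝ) * t ^ 2 = 4 * Real.log M := by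
        rw [ht2]; field_simp; ring
      rw [this, Real.exp_neg]
      congr 1
      rw [show (4 : ℝ) * Real.log M = (4 : ℕ) * Real.log M by norm_num,
        Real.exp_nat_mul, Real.exp_log hMpos]
    have hfinal : 2 * H * (P B).toReal ≤ 2 * H / M ^ 2 := by
      have h3 : (P B).toReal ≤ 2 * ((M : ℝ) ^ 4)⁻¹ := by rw [← hexp]; exact hPB
      have h4 : 2 * H * (P B).toReal ≤ 2 * H * (2 * ((M : ℝ) ^ 4)⁻¹) := by
        apply mul_le_mul_of_nonneg_left h3 (by positivity)
      refine h4.trans ?_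
      have hM4 : (0:ℝ) < (M:ℝ)^4 := by positivity
      have hM2' : (0:ℝ) < (M:ℝ)^2 := by positivity
      have key : (2:ℝ) * ((M:ℝ)^4)⁻¹ ≤ ((M:ℝ)^2)⁻¹ := by
        calc (2:ℝ) * ((M:ℝ)^4)⁻¹ = 2 / (M:ℝ)^4 := by rw [div_eq_mul_inv]
          _ ≤ 1 / (M:ℝ)^2 := by
              rw [div_le_div_iff₀ hM4 hM2']
              have h5 : (2:ℝ) ≤ (M:ℝ)^2 := by nlinarith
              have h6 := mul_le_mul_of_nonneg_right h5 hM2'.le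
              nlinarith
          _ = ((M:ℝ)^2)⁻¹ := one_div _
      rw [div_eq_mul_inv]
      exact mul_le_mul_of_nonneg_left key (by positivity)
    linarith
end
end

section
/- Let H > 0, L > 0, Δ ∈ (0, 1/2), and let M be a positive integer. Let f : [Δ, 1−Δ] → ℝ be L-Lipschitz on [Δ, 1−Δ] with |f(x)| ≤ H for all x ∈ [Δ, 1−Δ]. Let r ∈ [−H, H] and p ∈ [Δ, 1−Δ] satisfy f(p) = r. Let o_1, …, o_M be independent {0,1}-valued random variables each with mean p, let ō = (1/M)·Σ_{m=1}^M o_m, and let p̂ = trim[ō|Δ]. Then E|f(p̂) − r|² ≤ 2L²·log M / M + 4H²/M². -/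
open MeasureTheory ProbabilityTheory

noncomputable section

/-- Second inequality of the concentration-of-reward-difference lemma (Lemma A.1):
with `f` (playing the role of `σ⁻¹`) `L`-Lipschitz and bounded by `H` on `[Δ, 1−Δ]`,
`r = f(p)`, and `p̂` the trimmed empirical mean of `M` i.i.d. `{0,1}`-valued
preferences of mean `p`, we have `E|f(p̂) − r|² ≤ 2L² log M / M + 4H²/M²`. -/
theorem reward_difference_concentration_L2
    {Ω : Type*} [MeasurableSpace Ω] (P : Measure Ω) [IsProbabilityMeasure P]
    (H L Δ : ℝ) (hH : 0 < H) (hL : 0 < L) (hΔ0 : 0 < Δ) (hΔ : Δ < 1 / 2)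
    (M : ℕ) (hM : 0 < M)
    (f : ℝ → ℝ)
    (hf_lip : ∀ x ∈ Set.Icc Δ (1 - Δ), ∀ y ∈ Set.Icc Δ (1 - Δ),
      |f x - f y| ≤ L * |x - y|)
    (hf_bdd : ∀ x ∈ Set.Icc Δ (1 - Δ), |f x| ≤ H)
    (r p : ℝ) (hr : r ∈ Set.Icc (-H) H) (hp : p ∈ Set.Icc Δ (1 - Δ)) (hfp : f p = r)
    (o : Fin M → Ω → ℝ)
    (ho_meas : ∀ m, Measurable (o m))
    (ho_01 : ∀ m, ∀ᵐ ω ∂P, o m ω = 0 ∨ o m ω = 1)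
    (ho_mean : ∀ m, ∫ ω, o m ω ∂P = p)
    (ho_indep : iIndepFun o P) :
    ∫ ω, |f (trim Δ ((M : ℝ)⁻¹ * ∑ m, o m ω)) - r| ^ 2 ∂P ≤
      2 * L ^ 2 * Real.log M / M + 4 * H ^ 2 / M ^ 2 := by
  have hΔ1 : Δ ≤ 1 - Δ := by linarith
  have hpΔ : Δ ≤ p := hp.1
  have hp1 : p ≤ 1 - Δ := hp.2
  -- trim lands in the interval
  have htrim_mem : ∀ a : ℝ, trim Δ a ∈ Set.Icc Δ (1 - Δ) := by
    intro a
    constructor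
    · exact le_min (le_max_right _ _) hΔ1
    · exact min_le_right _ _
  -- trim is a contraction towards p
  have htrim_contr : ∀ a : ℝ, |trim Δ a - p| ≤ |a - p| := by
    intro a
    unfold trim
    rcases le_total a Δ with h1 | h1
    · rw [max_eq_right h1, min_eq_left hΔ1, abs_of_nonpos (by linarith),
        abs_of_nonpos (by linarith)]
      linarith
    · rcases le_total a (1 - Δ) with h2 | h2
      · rw [max_eq_left h1, min_eq_left h2]
      · rw [max_eq_left h1, min_eq_right h2, abs_of_nonneg (by linarith),
        abs_of_nonneg (by linarith)]
        linarith
  -- pointwise quadratic bound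
  have hpt : ∀ a : ℝ, |f (trim Δ a) - r| ^ 2 ≤ L ^ 2 * (a - p) ^ 2 := by
    intro a
    have h1 : |f (trim Δ a) - r| ≤ L * |a - p| := by
      calc |f (trim Δ a) - r| = |f (trim Δ a) - f p| := by rw [hfp]
        _ ≤ L * |trim Δ a - p| := hf_lip _ (htrim_mem a) _ hp
        _ ≤ L * |a - p| := by
            have := htrim_contr a
            nlinarith [abs_nonneg (trim Δ a - p)]
    have h0 : (0:ℝ) ≤ |f (trim Δ a) - r| := abs_nonneg _
    nlinarith [sq_abs (a - p)]
  -- integrability facts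
  have ho_int : ∀ m, Integrable (o m) P := by
    intro m
    refine Integrable.mono' (integrable_const 1) (ho_meas m).aestronglyMeasurable ?_
    filter_upwards [ho_01 m] with ω h
    rcases h with h | h <;> simp [h]
  set X : Fin M → Ω → ℝ := fun m ω => o m ω - p with hX
  have hX_meas : ∀ m, Measurable (X m) := fun m => (ho_meas m).sub measurable_const
  have hX_bdd : ∀ m, ∀ᵐ ω ∂P, |X m ω| ≤ 1 + |p| := by
    intro m
    filter_upwards [ho_01 m] with ω h
    have := abs_nonneg p
    rcases h with h | h <;> simp only [hX, h] <;>
      [rw [zero_sub, abs_neg]; skip] <;>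
      [exact le_add_of_nonneg_left zero_le_one;
       exact (abs_sub 1 p).trans (by simp)]
  have hX_int : ∀ m, Integrable (X m) P := fun m => (ho_int m).sub (integrable_const p)
  have hX_mean : ∀ m, ∫ ω, X m ω ∂P = 0 := by
    intro m
    rw [show X m = fun ω => o m ω - p from rfl]
    rw [integral_sub (ho_int m) (integrable_const p), ho_mean m, integral_const]
    simp
  have hXX_int : ∀ m k, Integrable (fun ω => X m ω * X k ω) P := by
    intro m k
    refine Integrable.mono' (integrable_const ((1 + |p|) * (1 + |p|)))
      ((hX_meas m).mul (hX_meas k)).aestronglyMeasurable ?_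
    filter_upwards [hX_bdd m, hX_bdd k] with ω h1 h2
    rw [Real.norm_eq_abs, abs_mul]
    have : (0:ℝ) ≤ 1 + |p| := by positivity
    exact mul_le_mul h1 h2 (abs_nonneg _) this
  -- second moments
  have hdiag : ∀ m, ∫ ω, X m ω * X m ω ∂P = p - p ^ 2 := by
    intro m
    have h1 : ∫ ω, X m ω * X m ω ∂P
        = ∫ ω, (o m ω - 2 * p * o m ω + p ^ 2) ∂P := by
      refine integral_congr_ae ?_
      filter_upwards [ho_01 m] with ω h
      rcases h with h | h <;> simp [hX, h] <;> ring
    rw [h1, integral_add (by exact (ho_int m).sub ((ho_int m).const_mul (2 * p)))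
      (integrable_const _), integral_sub (ho_int m) ((ho_int m).const_mul (2*p))]
    rw [integral_const, show (fun ω => 2 * p * o m ω) = fun ω => (2*p) * o m ω from rfl,
      integral_const_mul (2*p) (o m), ho_mean m]
    simp
    ring
  have hoff : ∀ m k, m ≠ k → ∫ ω, X m ω * X k ω ∂P = 0 := by
    intro m k hmk
    have hind : IndepFun (X m) (X k) P := by
      have h := ho_indep.indepFun hmk
      exact h.comp (measurable_id.sub_const p) (measurable_id.sub_const p)
    have h := IndepFun.integral_mul_eq_mul_integral hind (hX_int m).aestronglyMeasurable
      (hX_int k).aestronglyMeasurable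
    have h' : ∫ ω, X m ω * X k ω ∂P = ∫ ω, (X m * X k) ω ∂P := rfl
    rw [h', h, hX_mean m, hX_mean k]
    ring
  -- variance of the empirical mean
  have hn : (0:ℝ) < (M:ℝ) := by exact_mod_cast hM
  have hsum_rw : ∀ ω, ((M:ℝ)⁻¹ * ∑ m, o m ω - p) ^ 2
      = ((M:ℝ)⁻¹) ^ 2 * ∑ m, ∑ k, X m ω * X k ω := by
    intro ω
    have h1 : (M:ℝ)⁻¹ * ∑ m, o m ω - p = (M:ℝ)⁻¹ * ∑ m, X m ω := by
      rw [Finset.sum_sub_distrib]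
      simp [Finset.card_univ]
      field_simp
    rw [h1, mul_pow, sq (∑ m, X m ω), Finset.sum_mul_sum]
  have hvar : ∫ ω, ((M:ℝ)⁻¹ * ∑ m, o m ω - p) ^ 2 ∂P ≤ 1 / (4 * M) := by
    have h1 : ∫ ω, ((M:ℝ)⁻¹ * ∑ m, o m ω - p) ^ 2 ∂P
        = ((M:ℝ)⁻¹) ^ 2 * ∑ m, ∑ k, ∫ ω, X m ω * X k ω ∂P := by
      simp_rw [hsum_rw]
      rw [integral_const_mul, integral_finset_sum _ (fun m _ =>
        integrable_finset_sum _ (fun k _ => hXX_int m k))]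
      congr 1
      exact Finset.sum_congr rfl fun m _ => integral_finset_sum _ fun k _ => hXX_int m k
    rw [h1]
    have h2 : ∀ m : Fin M, ∑ k, ∫ ω, X m ω * X k ω ∂P = p - p ^ 2 := by
      intro m
      rw [Finset.sum_eq_single m (fun k _ hk => hoff m k (Ne.symm hk))
        (fun h => absurd (Finset.mem_univ m) h)]
      exact hdiag m
    simp_rw [h2, Finset.sum_const, Finset.card_univ, Fintype.card_fin, nsmul_eq_mul]
    have hpp : p - p ^ 2 ≤ 1 / 4 := by nlinarith [sq_nonneg (p - 1/2)]
    have : ((M:ℝ)⁻¹) ^ 2 * ((M:ℝ) * (p - p ^ 2)) = (p - p ^ 2) / M := by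
      field_simp
    rw [this]
    rw [div_le_div_iff₀ hn (by positivity)]
    nlinarith
  -- main integral bound
  have hmain : ∫ ω, |f (trim Δ ((M : ℝ)⁻¹ * ∑ m, o m ω)) - r| ^ 2 ∂P
      ≤ L ^ 2 * (1 / (4 * M)) := by
    have hInt : Integrable (fun ω => L ^ 2 * ((M:ℝ)⁻¹ * ∑ m, o m ω - p) ^ 2) P := by
      have : (fun ω => L ^ 2 * ((M:ℝ)⁻¹ * ∑ m, o m ω - p) ^ 2)
          = fun ω => L ^ 2 * (((M:ℝ)⁻¹) ^ 2 * ∑ m, ∑ k, X m ω * X k ω) := by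
        funext ω; rw [hsum_rw]
      rw [this]
      exact (((integrable_finset_sum _ (fun m _ =>
        integrable_finset_sum _ (fun k _ => hXX_int m k))).const_mul _).const_mul _)
    calc ∫ ω, |f (trim Δ ((M : ℝ)⁻¹ * ∑ m, o m ω)) - r| ^ 2 ∂P
        ≤ ∫ ω, L ^ 2 * ((M:ℝ)⁻¹ * ∑ m, o m ω - p) ^ 2 ∂P := by
          refine integral_mono_of_nonneg (Filter.Eventually.of_forall fun ω => by positivity)
            hInt (Filter.Eventually.of_forall fun ω => hpt _)
      _ = L ^ 2 * ∫ ω, ((M:ℝ)⁻¹ * ∑ m, o m ω - p) ^ 2 ∂P := integral_const_mul _ _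
      _ ≤ L ^ 2 * (1 / (4 * M)) := by
          exact mul_le_mul_of_nonneg_left hvar (by positivity)
  -- finish: case M = 1 vs M ≥ 2
  rcases eq_or_lt_of_le (show 1 ≤ M from hM) with hM1 | hM2
  · -- M = 1
    have hM1' : M = 1 := hM1.symm
    subst hM1'
    have hb : ∫ ω, |f (trim Δ ((1 : ℝ)⁻¹ * ∑ m, o m ω)) - r| ^ 2 ∂P ≤ 4 * H ^ 2 := by
      have hle : ∀ ω, |f (trim Δ ((1 : ℝ)⁻¹ * ∑ m : Fin 1, o m ω)) - r| ^ 2 ≤ 4 * H ^ 2 := by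
        intro ω
        have h1 := hf_bdd _ (htrim_mem ((1 : ℝ)⁻¹ * ∑ m : Fin 1, o m ω))
        have h2 : |r| ≤ H := abs_le.mpr hr
        have h3 := abs_sub (f (trim Δ ((1 : ℝ)⁻¹ * ∑ m : Fin 1, o m ω))) r
        nlinarith [abs_nonneg (f (trim Δ ((1 : ℝ)⁻¹ * ∑ m : Fin 1, o m ω)) - r)]
      calc ∫ ω, |f (trim Δ ((1 : ℝ)⁻¹ * ∑ m, o m ω)) - r| ^ 2 ∂P
          ≤ ∫ _ω, 4 * H ^ 2 ∂P :=
            integral_mono_of_nonneg (Filter.Eventually.of_forall fun ω => by positivity)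
              (integrable_const _) (Filter.Eventually.of_forall hle)
        _ = 4 * H ^ 2 := by simp
    simpa using hb.trans (by norm_num [Real.log_one])
  · -- M ≥ 2
    have hM2' : (2:ℝ) ≤ (M:ℝ) := by exact_mod_cast hM2
    have hlog : Real.log 2 ≤ Real.log M := Real.log_le_log (by norm_num) hM2'
    have hlog2 : (0.6931471803 : ℝ) < Real.log 2 := Real.log_two_gt_d9
    have hkey : L ^ 2 * (1 / (4 * M)) ≤ 2 * L ^ 2 * Real.log M / M := by
      have hprod : (0:ℝ) ≤ L ^ 2 * (M:ℝ) * (8 * Real.log M - 1) :=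
        mul_nonneg (mul_nonneg (sq_nonneg L) hn.le) (by linarith)
      have h1 : L ^ 2 * (1 / (4 * (M:ℝ))) = L ^ 2 / (4 * M) := by ring
      rw [h1, div_le_div_iff₀ (by positivity) hn]
      nlinarith [hprod]
    refine hmain.trans (hkey.trans ?_)
    have : (0:ℝ) ≤ 4 * H ^ 2 / M ^ 2 := by positivity
    linarith
end
end

section
/- Let V : ℝ^d → ℝ be differentiable with L-Lipschitz gradient (L-smooth), let μ > 0, and define the smoothed function V_μ(θ) = E_{v' ∼ Unif(B^d)} [V(θ + μ v')], where Unif(B^d) is the uniform probability measure on the closed unit Euclidean ball of ℝ^d. Then for every θ ∈ ℝ^d, ‖∇V_μ(θ) − ∇V(θ)‖₂ ≤ μ L d / 2. -/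
open MeasureTheory

noncomputable section

/-- The uniform probability measure on the closed unit Euclidean ball of `ℝ^d`. -/
def ballUniform (d : ℕ) : Measure (EuclideanSpace ℝ (Fin d)) :=
  (volume (Metric.closedBall (0 : EuclideanSpace ℝ (Fin d)) 1))⁻¹ •
    volume.restrict (Metric.closedBall (0 : EuclideanSpace ℝ (Fin d)) 1)

/-- The uniform probability measure on the unit Euclidean sphere of `ℝ^d`,
viewed as a measure on `ℝ^d` (the normalized surface measure). -/
def sphereUniform (d : ℕ) : Measure (EuclideanSpace ℝ (Fin d)) :=
  ((volume : Measure (EuclideanSpace ℝ (Fin d))).toSphere Set.univ)⁻¹ •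
    Measure.map Subtype.val (volume : Measure (EuclideanSpace ℝ (Fin d))).toSphere

/-- The randomized smoothing `V_μ(θ) = E_{v' ∼ Unif(B^d)}[V(θ + μ v')]` of `V`. -/
def smoothed (d : ℕ) (V : EuclideanSpace ℝ (Fin d) → ℝ) (μ : ℝ)
    (θ : EuclideanSpace ℝ (Fin d)) : ℝ :=
  ∫ v, V (θ + μ • v) ∂(ballUniform d)

namespace SmoothedAux

open Metric InnerProductSpace NNReal Set

variable {d : ℕ}

lemma volB_pos : 0 < volume (Metric.closedBall (0 : EuclideanSpace ℝ (Fin d)) 1) :=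
  measure_closedBall_pos _ _ one_pos

lemma volB_lt_top : volume (Metric.closedBall (0 : EuclideanSpace ℝ (Fin d)) 1) < ⊤ :=
  measure_closedBall_lt_top

instance ballUniform_prob : IsProbabilityMeasure (ballUniform d) := by
  constructor
  rw [ballUniform, Measure.smul_apply, Measure.restrict_apply MeasurableSet.univ,
    Set.univ_inter, smul_eq_mul]
  exact ENNReal.inv_mul_cancel volB_pos.ne' volB_lt_top.ne

lemma integrable_ballUniform {X : Type*} [NormedAddCommGroup X]
    {f : EuclideanSpace ℝ (Fin d) → X} (hf : Continuous f) :
    Integrable f (ballUniform d) := by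
  rw [ballUniform]
  refine Integrable.smul_measure ?_ (by simp [volB_pos.ne'])
  exact hf.continuousOn.integrableOn_compact (isCompact_closedBall _ _)

lemma ae_mem_ball : ∀ᵐ v ∂(ballUniform d),
    v ∈ Metric.closedBall (0 : EuclideanSpace ℝ (Fin d)) 1 := by
  rw [ballUniform]
  exact Measure.ae_smul_measure (ae_restrict_mem measurableSet_closedBall) _

lemma mean_norm_ball (hd : 0 < d) :
    ∫ v, ‖v‖ ∂(ballUniform d) = d / (d + 1) := by
  haveI : Nonempty (Fin d) := Fin.pos_iff_nonempty.mp hd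
  have key : ∫ x in Metric.closedBall (0 : EuclideanSpace ℝ (Fin d)) 1, ‖x‖ =
      d * (volume (Metric.closedBall (0 : EuclideanSpace ℝ (Fin d)) 1)).toReal
        * (1 / (d + 1)) := by
    set f : ℝ → ℝ := Set.indicator (Set.Icc 0 1) id with hf
    have h1 : ∫ x in Metric.closedBall (0 : EuclideanSpace ℝ (Fin d)) 1, ‖x‖ =
        ∫ x : EuclideanSpace ℝ (Fin d), f ‖x‖ := by
      rw [← integral_indicator measurableSet_closedBall]
      congr 1
      funext x
      by_cases h : ‖x‖ ≤ 1
      · simp [hf, Set.indicator, h, mem_closedBall_zero_iff, norm_nonneg]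
      · simp [hf, Set.indicator, h, mem_closedBall_zero_iff]
    rw [h1, integral_fun_norm_addHaar volume f]
    have hdim : Module.finrank ℝ (EuclideanSpace ℝ (Fin d)) = d := finrank_euclideanSpace_fin
    rw [hdim]
    have h2 : ∫ y in Set.Ioi (0:ℝ), y ^ (d - 1) • f y = 1 / (d + 1) := by
      have e1 : ∀ y ∈ Set.Ioi (0:ℝ), y ^ (d - 1) • f y =
          Set.indicator (Set.Ioc (0:ℝ) 1) (fun y => y ^ d) y := by
        intro y hy
        simp only [Set.mem_Ioi] at hy
        by_cases h : y ≤ 1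
        · have : y ^ (d - 1) * y = y ^ d := by
            rw [← pow_succ, Nat.sub_add_cancel hd]
          simp [hf, Set.indicator, hy.le, hy, h, smul_eq_mul, this]
        · simp [hf, Set.indicator, hy, h]
      rw [setIntegral_congr_fun measurableSet_Ioi e1, integral_indicator measurableSet_Ioc,
        Measure.restrict_restrict measurableSet_Ioc]
      have : Set.Ioc (0:ℝ) 1 ∩ Set.Ioi 0 = Set.Ioc (0:ℝ) 1 := by
        ext y; simp (config := {contextual := true}) [and_assoc]
      rw [this, ← intervalIntegral.integral_of_le (by norm_num : (0:ℝ) ≤ 1)]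
      rw [integral_pow]
      norm_num
    rw [h2, nsmul_eq_mul, smul_eq_mul, Measure.addHaar_closedBall_eq_addHaar_ball]
    rw [measureReal_def]; ring
  have hvol : (volume (Metric.closedBall (0 : EuclideanSpace ℝ (Fin d)) 1)).toReal ≠ 0 :=
    (ENNReal.toReal_pos volB_pos.ne' volB_lt_top.ne).ne'
  rw [ballUniform, integral_smul_measure, key, ENNReal.toReal_inv, smul_eq_mul]
  field_simp

lemma fderiv_eq_toDual (V : EuclideanSpace ℝ (Fin d) → ℝ) (y : EuclideanSpace ℝ (Fin d)) :
    fderiv ℝ V y = (toDual ℝ (EuclideanSpace ℝ (Fin d))) (gradient V y) :=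
  ((toDual ℝ _).apply_symm_apply _).symm

lemma fderiv_lipschitz {V : EuclideanSpace ℝ (Fin d) → ℝ} {L : ℝ≥0}
    (h : LipschitzWith L (fun y => gradient V y)) :
    LipschitzWith L (fun y => fderiv ℝ V y) := by
  have : (fun y => fderiv ℝ V y)
      = fun y => (toDual ℝ (EuclideanSpace ℝ (Fin d))) (gradient V y) := by
    funext y; exact fderiv_eq_toDual V y
  rw [this]
  simpa using (toDual ℝ (EuclideanSpace ℝ (Fin d))).lipschitz.comp h

lemma hasGradient_smoothed (L μ : ℝ) (hL : 0 < L) (hμ : 0 < μ)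
    (V : EuclideanSpace ℝ (Fin d) → ℝ)
    (hVdiff : Differentiable ℝ V)
    (hVlip : LipschitzWith (Real.toNNReal L) (fun θ => gradient V θ))
    (θ : EuclideanSpace ℝ (Fin d)) :
    HasGradientAt (smoothed d V μ) (∫ v, gradient V (θ + μ • v) ∂(ballUniform d)) θ := by
  have hlipf : LipschitzWith (Real.toNNReal L) (fun y => fderiv ℝ V y) :=
    fderiv_lipschitz hVlip
  have hcontg : Continuous fun y : EuclideanSpace ℝ (Fin d) => fderiv ℝ V y :=
    hlipf.continuous
  have hshift : ∀ x : EuclideanSpace ℝ (Fin d),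
      Continuous fun v : EuclideanSpace ℝ (Fin d) => x + μ • v :=
    fun x => continuous_const.add (continuous_id.const_smul μ)
  have key : HasFDerivAt (fun x => ∫ v, V (x + μ • v) ∂(ballUniform d))
      (∫ v, fderiv ℝ V (θ + μ • v) ∂(ballUniform d)) θ := by
    apply hasFDerivAt_integral_of_dominated_of_fderiv_le
      (F' := fun x v => fderiv ℝ V (x + μ • v))
      (bound := fun _ => ‖fderiv ℝ V θ‖ + L * (1 + μ)) (s := Metric.ball θ 1) (Metric.ball_mem_nhds θ one_pos)
    · exact Filter.Eventually.of_forall fun x =>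
        (hVdiff.continuous.comp (hshift x)).aestronglyMeasurable
    · exact integrable_ballUniform (hVdiff.continuous.comp (hshift θ))
    · exact (hcontg.comp (hshift θ)).aestronglyMeasurable
    · filter_upwards [ae_mem_ball] with v hv x hx
      have h1 : ‖fderiv ℝ V (x + μ • v) - fderiv ℝ V θ‖ ≤ L * ‖x + μ • v - θ‖ := by
        have := hlipf.dist_le_mul (x + μ • v) θ
        rw [dist_eq_norm, dist_eq_norm] at this
        exact this.trans (by
          rw [Real.coe_toNNReal L hL.le])
      have h2 : ‖x + μ • v - θ‖ ≤ 1 + μ := by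
        have : x + μ • v - θ = (x - θ) + μ • v := by abel
        rw [this]
        refine (norm_add_le _ _).trans ?_
        have hx1 : ‖x - θ‖ ≤ 1 := by
          rw [← dist_eq_norm]; exact (Metric.mem_ball.mp hx).le
        have hv1 : ‖μ • v‖ ≤ μ := by
          rw [norm_smul, Real.norm_eq_abs, abs_of_pos hμ]
          have : ‖v‖ ≤ 1 := mem_closedBall_zero_iff.mp hv
          nlinarith
        linarith
      calc ‖fderiv ℝ V (x + μ • v)‖
          ≤ ‖fderiv ℝ V θ‖ + ‖fderiv ℝ V (x + μ • v) - fderiv ℝ V θ‖ := by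
            have := norm_add_le (fderiv ℝ V θ) (fderiv ℝ V (x + μ • v) - fderiv ℝ V θ)
            simpa using this
        _ ≤ ‖fderiv ℝ V θ‖ + L * (1 + μ) := by nlinarith
    · exact integrable_const _
    · refine Filter.Eventually.of_forall fun v x _ => ?_
      have h1 : HasFDerivAt (fun x : EuclideanSpace ℝ (Fin d) => x + μ • v)
          (ContinuousLinearMap.id ℝ _) x := (hasFDerivAt_id x).add_const _
      simpa [Function.comp_def] using (hVdiff (x + μ • v)).hasFDerivAt.comp x h1
  have heq : ∫ v, fderiv ℝ V (θ + μ • v) ∂(ballUniform d)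
      = (toDual ℝ (EuclideanSpace ℝ (Fin d)))
          (∫ v, gradient V (θ + μ • v) ∂(ballUniform d)) := by
    have : ∀ v : EuclideanSpace ℝ (Fin d), fderiv ℝ V (θ + μ • v)
        = (toDual ℝ (EuclideanSpace ℝ (Fin d))) (gradient V (θ + μ • v)) :=
      fun v => fderiv_eq_toDual V _
    simp_rw [this]
    exact (toDual ℝ (EuclideanSpace ℝ (Fin d))).toLinearIsometry.integral_comp_comm _
  rw [hasGradientAt_iff_hasFDerivAt, ← heq]
  exact key

end SmoothedAux

open SmoothedAux Metric InnerProductSpace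

/-- Gradient closeness of the randomized smoothing (part 3 of Lemma B.1):
if `V` is `L`-smooth then `‖∇V_μ(θ) − ∇V(θ)‖ ≤ μLd/2` for every `θ`. -/
theorem smoothed_gradient_close
    (d : ℕ) (L μ : ℝ) (hL : 0 < L) (hμ : 0 < μ)
    (V : EuclideanSpace ℝ (Fin d) → ℝ)
    (hVdiff : Differentiable ℝ V)
    (hVlip : LipschitzWith (Real.toNNReal L) (fun θ => gradient V θ))
    (θ : EuclideanSpace ℝ (Fin d)) :
    ‖gradient (smoothed d V μ) θ - gradient V θ‖ ≤ μ * L * d / 2 := by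
  rcases Nat.eq_zero_or_pos d with hd | hd
  · subst hd
    haveI : Subsingleton (EuclideanSpace ℝ (Fin 0)) := inferInstance
    have : gradient (smoothed 0 V μ) θ - gradient V θ = 0 := Subsingleton.elim _ _
    rw [this, norm_zero]
    positivity
  · have hgrad := hasGradient_smoothed L μ hL hμ V hVdiff hVlip θ
    have hEq : gradient (smoothed d V μ) θ
        = ∫ v, gradient V (θ + μ • v) ∂(ballUniform d) := by
      have hdiff : DifferentiableAt ℝ (smoothed d V μ) θ := by
        have := hgrad.hasFDerivAt
        exact this.differentiableAt
      exact hdiff.hasGradientAt.unique hgrad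
    rw [hEq]
    have hIntg : Integrable (fun v => gradient V (θ + μ • v)) (ballUniform d) := by
      apply integrable_ballUniform
      exact hVlip.continuous.comp (continuous_const.add (continuous_id.const_smul μ))
    have hsub : (∫ v, gradient V (θ + μ • v) ∂(ballUniform d)) - gradient V θ
        = ∫ v, (gradient V (θ + μ • v) - gradient V θ) ∂(ballUniform d) := by
      rw [integral_sub hIntg (integrable_const _), integral_const]
      simp
    rw [hsub]
    have hbound : ∀ᵐ v ∂(ballUniform d),
        ‖gradient V (θ + μ • v) - gradient V θ‖ ≤ (L * μ) * ‖v‖ := by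
      refine Filter.Eventually.of_forall fun v => ?_
      have := hVlip.dist_le_mul (θ + μ • v) θ
      rw [dist_eq_norm, dist_eq_norm] at this
      have h2 : θ + μ • v - θ = μ • v := by abel
      rw [h2, norm_smul, Real.norm_eq_abs, abs_of_pos hμ] at this
      calc ‖gradient V (θ + μ • v) - gradient V θ‖ ≤ (Real.toNNReal L : ℝ) * (μ * ‖v‖) := this
        _ = (L * μ) * ‖v‖ := by rw [Real.coe_toNNReal L hL.le]; ring
    have hIntbd : Integrable (fun v : EuclideanSpace ℝ (Fin d) => (L * μ) * ‖v‖)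
        (ballUniform d) := integrable_ballUniform (continuous_const.mul continuous_norm)
    have h3 : ‖∫ v, (gradient V (θ + μ • v) - gradient V θ) ∂(ballUniform d)‖
        ≤ ∫ v, (L * μ) * ‖v‖ ∂(ballUniform d) :=
      norm_integral_le_of_norm_le hIntbd hbound
    have h4 : ∫ v, (L * μ) * ‖v‖ ∂(ballUniform d) = (L * μ) * (d / (d + 1)) := by
      rw [integral_const_mul, mean_norm_ball hd]
    have h5 : (d : ℝ) / (d + 1) ≤ d / 2 := by
      have hd1 : (1 : ℝ) ≤ d := by exact_mod_cast hd
      rw [div_le_div_iff₀ (by linarith) (by norm_num)]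
      nlinarith
    calc ‖∫ v, (gradient V (θ + μ • v) - gradient V θ) ∂(ballUniform d)‖
        ≤ (L * μ) * (d / (d + 1)) := by rw [← h4]; exact h3
      _ ≤ (L * μ) * (d / 2) := by
          apply mul_le_mul_of_nonneg_left h5 (by positivity)
      _ = μ * L * d / 2 := by ring
end
end

section
/- Let V : ℝ^d → ℝ be differentiable with L-Lipschitz gradient (L-smooth) and let μ > 0. Then for every θ ∈ ℝ^d, E_{v ∼ Unif(S^{d−1})} [ ‖ (d/μ)·(V(θ + μ v) − V(θ))·v ‖₂² ] ≤ 2 d ‖∇V(θ)‖₂² + μ² L² d² / 2, where Unif(S^{d−1}) is the uniform probability measure on the unit Euclidean sphere of ℝ^d. -/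
open MeasureTheory Metric Set
open scoped Pointwise ENNReal

noncomputable section

variable {E : Type*} [NormedAddCommGroup E] [InnerProductSpace ℝ E]
  [FiniteDimensional ℝ E] [MeasurableSpace E] [BorelSpace E]

lemma vol_preimage_isometry (f : E ≃ₗᵢ[ℝ] E) (s : Set E) :
    volume (f ⁻¹' s) = volume s := by
  by_cases htriv : Nontrivial E
  · have h := Measure.addHaar_preimage_linearEquiv (volume : Measure E) f.toLinearEquiv
    have hb : volume ((f : E → E) ⁻¹' (ball (0:E) 1)) = volume (ball (0:E) 1) :=
      f.measurePreserving.measure_preimage measurableSet_ball.nullMeasurableSet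
    have h1 : ENNReal.ofReal
        |LinearMap.det ((f.toLinearEquiv.symm : E ≃ₗ[ℝ] E) : E →ₗ[ℝ] E)| = 1 := by
      have hb1 := h (ball (0:E) 1)
      rw [show (f.toLinearEquiv : E → E) = (f : E → E) from rfl, hb] at hb1
      have h0 : volume (ball (0:E) 1) ≠ 0 := (measure_ball_pos _ _ one_pos).ne'
      have hfin : volume (ball (0:E) 1) ≠ ⊤ := measure_ball_lt_top.ne
      exact (ENNReal.mul_eq_right h0 hfin).mp hb1.symm
    have := h s
    rw [h1, one_mul] at this
    exact this
  · rw [not_nontrivial_iff_subsingleton] at htriv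
    congr 1
    ext x
    simp [Subsingleton.elim (f x) x]

/-- The map induced on the unit sphere by a linear isometry equivalence. -/
def sphereMap (f : E ≃ₗᵢ[ℝ] E) (v : sphere (0:E) 1) : sphere (0:E) 1 :=
  ⟨f v, by
    have : ‖(v:E)‖ = 1 := by simpa using v.2
    simp [mem_sphere_zero_iff_norm, this]⟩

lemma continuous_sphereMap (f : E ≃ₗᵢ[ℝ] E) : Continuous (sphereMap f) :=
  Continuous.subtype_mk (f.continuous.comp continuous_subtype_val) _

lemma image_val_preimage_sphereMap (f : E ≃ₗᵢ[ℝ] E) (s : Set (sphere (0:E) 1)) :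
    Subtype.val '' (sphereMap f ⁻¹' s) = (f : E → E) ⁻¹' (Subtype.val '' s) := by
  ext x
  constructor
  · rintro ⟨v, hv, rfl⟩
    exact ⟨sphereMap f v, hv, rfl⟩
  · rintro ⟨w, hw, hwx⟩
    have hx : ‖x‖ = 1 := by
      have h1 : ‖(w:E)‖ = 1 := by simpa using w.2
      rw [← f.norm_map x, ← hwx]; exact h1
    refine ⟨⟨x, by simp [mem_sphere_zero_iff_norm, hx]⟩, ?_, rfl⟩
    show sphereMap f _ ∈ s
    have heq : sphereMap f ⟨x, by simp [mem_sphere_zero_iff_norm, hx]⟩ = w := by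
      apply Subtype.ext; exact hwx.symm
    rw [heq]; exact hw

lemma smul_preimage_linear (f : E ≃ₗᵢ[ℝ] E) (t : Set E) :
    Ioo (0:ℝ) 1 • ((f : E → E) ⁻¹' t) = (f : E → E) ⁻¹' (Ioo (0:ℝ) 1 • t) := by
  ext x
  simp only [mem_smul_set, Set.mem_preimage]
  constructor
  · rintro ⟨c, hc, y, hy, rfl⟩
    exact ⟨c, hc, f y, hy, by simp [_root_.map_smul]⟩
  · rintro ⟨c, hc, y, hy, hxy⟩
    refine ⟨c, hc, f.symm y, by simpa using hy, ?_⟩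
    apply f.injective
    simp [_root_.map_smul, hxy]

lemma toSphere_map_sphereMap (f : E ≃ₗᵢ[ℝ] E) :
    Measure.map (sphereMap f) (volume : Measure E).toSphere = (volume : Measure E).toSphere := by
  refine Measure.ext fun s hs => ?_
  rw [Measure.map_apply (continuous_sphereMap f).measurable hs,
    Measure.toSphere_apply' _ (hs.preimage (continuous_sphereMap f).measurable),
    Measure.toSphere_apply' _ hs, image_val_preimage_sphereMap, smul_preimage_linear,
    vol_preimage_isometry]

local notation "⟪" x ", " y "⟫" => @inner ℝ _ _ x y

lemma integrable_inner_sq (g : E) :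
    Integrable (fun v : sphere (0:E) 1 => ⟪g, (v:E)⟫ ^ 2) (volume : Measure E).toSphere := by
  have hcont : Continuous fun v : sphere (0:E) 1 => ⟪g, (v:E)⟫ ^ 2 :=
    ((continuous_const.inner continuous_subtype_val)).pow 2
  refine ⟨hcont.aestronglyMeasurable, ?_⟩
  refine HasFiniteIntegral.of_bounded (C := ‖g‖^2) ?_
  filter_upwards with v
  have hv : ‖(v:E)‖ = 1 := by simpa using v.2
  have := abs_real_inner_le_norm g (v:E)
  rw [hv, mul_one] at this
  rw [Real.norm_eq_abs, abs_pow, ← sq_abs ‖g‖]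
  exact pow_le_pow_left₀ (abs_nonneg _) (by simpa using this) 2

lemma integral_inner_sq_eq (a b : E) (ha : ‖a‖ = 1) (hb : ‖b‖ = 1) :
    ∫ v : sphere (0:E) 1, ⟪a, (v:E)⟫ ^ 2 ∂(volume : Measure E).toSphere =
    ∫ v : sphere (0:E) 1, ⟪b, (v:E)⟫ ^ 2 ∂(volume : Measure E).toSphere := by
  set K := (ℝ ∙ (a - b))ᗮ
  set f := K.reflection
  have hfa : f a = b := Submodule.reflection_sub (by rw [ha, hb])
  have hcont : Continuous fun v : sphere (0:E) 1 => ⟪a, (v:E)⟫ ^ 2 :=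
    ((continuous_const.inner continuous_subtype_val)).pow 2
  calc ∫ v : sphere (0:E) 1, ⟪a, (v:E)⟫ ^ 2 ∂(volume : Measure E).toSphere
      = ∫ v : sphere (0:E) 1, ⟪a, (v:E)⟫ ^ 2
          ∂(Measure.map (sphereMap f) (volume : Measure E).toSphere) := by
        rw [toSphere_map_sphereMap]
    _ = ∫ v : sphere (0:E) 1, ⟪a, ((sphereMap f v : sphere (0:E) 1) : E)⟫ ^ 2
          ∂(volume : Measure E).toSphere := by
        rw [integral_map (continuous_sphereMap f).measurable.aemeasurable
          hcont.aestronglyMeasurable]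
    _ = ∫ v : sphere (0:E) 1, ⟪b, (v:E)⟫ ^ 2 ∂(volume : Measure E).toSphere := by
        refine integral_congr_ae (Filter.Eventually.of_forall fun v => ?_)
        have : ⟪a, f (v:E)⟫ = ⟪f a, (v:E)⟫ := by
          conv_lhs => rw [show a = f (f a) from (Submodule.reflection_involutive K a).symm]
          exact f.inner_map_map (f a) (v:E)
        simp only [sphereMap]
        rw [this, hfa]

lemma integral_inner_sq_value {d : ℕ} (hd : 0 < d) (g : EuclideanSpace ℝ (Fin d)) :
    ∫ v : sphere (0 : EuclideanSpace ℝ (Fin d)) 1, ⟪g, (v : EuclideanSpace ℝ (Fin d))⟫ ^ 2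
      ∂(volume : Measure (EuclideanSpace ℝ (Fin d))).toSphere =
    ‖g‖ ^ 2 / d * ((volume : Measure (EuclideanSpace ℝ (Fin d))).toSphere Set.univ).toReal := by
  set σ := (volume : Measure (EuclideanSpace ℝ (Fin d))).toSphere with hσ
  set e : Fin d → EuclideanSpace ℝ (Fin d) := fun i => EuclideanSpace.single i (1:ℝ) with he
  have hnorm_e : ∀ i, ‖e i‖ = 1 := fun i => by simp [he, EuclideanSpace.norm_single]
  have i0 : Fin d := ⟨0, hd⟩
  -- sum of coordinate integrals equals total mass
  have hsum : ∑ i : Fin d, ∫ v : sphere (0 : EuclideanSpace ℝ (Fin d)) 1,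
      ⟪e i, (v : EuclideanSpace ℝ (Fin d))⟫ ^ 2 ∂σ = (σ Set.univ).toReal := by
    rw [← integral_finset_sum _ fun i _ => integrable_inner_sq (e i)]
    have : ∀ v : sphere (0 : EuclideanSpace ℝ (Fin d)) 1,
        ∑ i : Fin d, ⟪e i, (v : EuclideanSpace ℝ (Fin d))⟫ ^ 2 = 1 := by
      intro v
      have hv : ‖(v : EuclideanSpace ℝ (Fin d))‖ = 1 := by simpa using v.2
      have : ∑ i : Fin d, ⟪e i, (v : EuclideanSpace ℝ (Fin d))⟫ ^ 2
          = ⟪(v : EuclideanSpace ℝ (Fin d)), (v : EuclideanSpace ℝ (Fin d))⟫ := by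
        rw [PiLp.inner_apply]; simp [he, EuclideanSpace.inner_single_left, RCLike.inner_apply, pow_two]
      rw [this, real_inner_self_eq_norm_sq, hv]; norm_num
    simp only [this]
    rw [integral_const, smul_eq_mul, mul_one]
    rfl
  -- all coordinate integrals are equal
  have hequal : ∀ i, ∫ v : sphere (0 : EuclideanSpace ℝ (Fin d)) 1,
      ⟪e i, (v : EuclideanSpace ℝ (Fin d))⟫ ^ 2 ∂σ
      = ∫ v : sphere (0 : EuclideanSpace ℝ (Fin d)) 1,
      ⟪e i0, (v : EuclideanSpace ℝ (Fin d))⟫ ^ 2 ∂σ := fun i =>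
    integral_inner_sq_eq _ _ (hnorm_e i) (hnorm_e i0)
  have hbase : ∫ v : sphere (0 : EuclideanSpace ℝ (Fin d)) 1,
      ⟪e i0, (v : EuclideanSpace ℝ (Fin d))⟫ ^ 2 ∂σ = (σ Set.univ).toReal / d := by
    have : ∑ i : Fin d, ∫ v : sphere (0 : EuclideanSpace ℝ (Fin d)) 1,
        ⟪e i, (v : EuclideanSpace ℝ (Fin d))⟫ ^ 2 ∂σ
        = d * ∫ v : sphere (0 : EuclideanSpace ℝ (Fin d)) 1,
        ⟪e i0, (v : EuclideanSpace ℝ (Fin d))⟫ ^ 2 ∂σ := by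
      rw [Finset.sum_congr rfl fun i _ => hequal i]; simp [mul_comm]
    rw [this] at hsum
    field_simp at hsum ⊢
    linarith [hsum]
  -- general g
  rcases eq_or_ne g 0 with rfl | hg
  · simp
  · have hu : ‖(‖g‖⁻¹ • g)‖ = 1 := by
      rw [norm_smul]; simp [norm_ne_zero_iff.2 hg]
    have hgu : ∀ v : EuclideanSpace ℝ (Fin d), ⟪g, v⟫ = ‖g‖ * ⟪(‖g‖⁻¹ • g), v⟫ := by
      intro v
      rw [real_inner_smul_left, ← mul_assoc, mul_inv_cancel₀ (norm_ne_zero_iff.2 hg), one_mul]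
    calc ∫ v : sphere (0 : EuclideanSpace ℝ (Fin d)) 1,
          ⟪g, (v : EuclideanSpace ℝ (Fin d))⟫ ^ 2 ∂σ
        = ∫ v : sphere (0 : EuclideanSpace ℝ (Fin d)) 1,
          ‖g‖^2 * ⟪(‖g‖⁻¹ • g), (v : EuclideanSpace ℝ (Fin d))⟫ ^ 2 ∂σ := by
          refine integral_congr_ae (Filter.Eventually.of_forall fun v => ?_)
          dsimp only
          rw [hgu]; ring
      _ = ‖g‖^2 * ∫ v : sphere (0 : EuclideanSpace ℝ (Fin d)) 1,
          ⟪(‖g‖⁻¹ • g), (v : EuclideanSpace ℝ (Fin d))⟫ ^ 2 ∂σ := integral_const_mul _ _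
      _ = ‖g‖^2 * ((σ Set.univ).toReal / d) := by
          rw [integral_inner_sq_eq _ _ hu (hnorm_e i0), hbase]
      _ = ‖g‖ ^ 2 / d * (σ Set.univ).toReal := by ring

section Descent
variable [CompleteSpace E]

lemma descent_lemma (V : E → ℝ) (hVdiff : Differentiable ℝ V) {L : ℝ} (hL : 0 ≤ L)
    (hVlip : LipschitzWith (Real.toNNReal L) (fun x => gradient V x)) (x y : E) :
    |V y - V x - ⟪gradient V x, y - x⟫| ≤ L / 2 * ‖y - x‖ ^ 2 := by
  set w := y - x with hw
  have hgrad_cont : Continuous fun z : E => gradient V z := hVlip.continuous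
  have hline : ∀ t : ℝ, HasDerivAt (fun s : ℝ => V (x + s • w)) ⟪gradient V (x + t • w), w⟫ t := by
    intro t
    have h1 : HasDerivAt (fun s : ℝ => x + s • w) w t := by
      simpa using ((hasDerivAt_id t).smul_const w).const_add x
    have h2 := (hVdiff (x + t • w)).hasFDerivAt.comp_hasDerivAt t h1
    convert h2 using 1
    · rfl
    · rfl
    · rfl
    rw [gradient]
    simp [InnerProductSpace.toDual_symm_apply]
  have hcont : Continuous fun t : ℝ => ⟪gradient V (x + t • w), w⟫ :=
    (hgrad_cont.comp (by fun_prop)).inner continuous_const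
  have hftc : V y - V x = ∫ t in (0:ℝ)..1, ⟪gradient V (x + t • w), w⟫ := by
    rw [intervalIntegral.integral_eq_sub_of_hasDerivAt (fun t _ => hline t)
      (hcont.intervalIntegrable 0 1)]
    simp [hw]
  have hconst : ⟪gradient V x, w⟫ = ∫ t in (0:ℝ)..1, ⟪gradient V x, w⟫ := by simp
  rw [hftc, hconst, ← intervalIntegral.integral_sub (hcont.intervalIntegrable 0 1)
    (by simp)]
  have hbound : ∀ t ∈ Set.uIcc (0:ℝ) 1,
      ‖⟪gradient V (x + t • w), w⟫ - ⟪gradient V x, w⟫‖ ≤ L * ‖w‖^2 * t := by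
    intro t ht
    rw [Set.uIcc_of_le zero_le_one] at ht
    rw [← inner_sub_left, Real.norm_eq_abs]
    calc |⟪gradient V (x + t • w) - gradient V x, w⟫|
        ≤ ‖gradient V (x + t • w) - gradient V x‖ * ‖w‖ := abs_real_inner_le_norm _ _
      _ ≤ (L * ‖t • w‖) * ‖w‖ := by
          gcongr
          have := hVlip.dist_le_mul (x + t • w) x
          rw [dist_eq_norm] at this
          simpa [Real.coe_toNNReal L hL, dist_eq_norm] using this
      _ = L * ‖w‖^2 * t := by
          rw [norm_smul, Real.norm_eq_abs, abs_of_nonneg ht.1]; ring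
  have hIb : IntervalIntegrable (fun t : ℝ => L * ‖w‖^2 * t) volume 0 1 :=
    (continuous_const.mul continuous_id).intervalIntegrable 0 1
  calc |∫ t in (0:ℝ)..1, (⟪gradient V (x + t • w), w⟫ - ⟪gradient V x, w⟫)|
      ≤ |∫ t in (0:ℝ)..1, L * ‖w‖^2 * t| := by
        rw [← Real.norm_eq_abs (∫ t in (0:ℝ)..1, (⟪gradient V (x + t • w), w⟫ - ⟪gradient V x, w⟫))]
        refine intervalIntegral.norm_integral_le_abs_of_norm_le (f := fun t =>
          (⟪gradient V (x + t • w), w⟫ - ⟪gradient V x, w⟫)) ?_ hIb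
        filter_upwards [MeasureTheory.ae_restrict_mem measurableSet_uIoc] with t ht
        exact hbound t (Set.uIoc_subset_uIcc ht)
    _ = ∫ t in (0:ℝ)..1, L * ‖w‖^2 * t := by
        rw [abs_of_nonneg]
        refine intervalIntegral.integral_nonneg zero_le_one fun t ht => ?_
        have : 0 ≤ t := ht.1
        positivity
    _ = L / 2 * ‖w‖ ^ 2 := by
        rw [intervalIntegral.integral_const_mul, integral_id]
        ring

end Descent



/-- Second-moment bound for the two-point zeroth-order gradient estimator
(part 4 of Lemma B.1): if `V` is `L`-smooth then
`E_{v∼Unif(S^{d−1})} ‖(d/μ)(V(θ+μv)−V(θ)) v‖² ≤ 2d‖∇V(θ)‖² + μ²L²d²/2`. -/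
theorem zeroth_order_estimator_second_moment
    (d : ℕ) (hd : 0 < d) (L μ : ℝ) (hL : 0 < L) (hμ : 0 < μ)
    (V : EuclideanSpace ℝ (Fin d) → ℝ)
    (hVdiff : Differentiable ℝ V)
    (hVlip : LipschitzWith (Real.toNNReal L) (fun θ => gradient V θ))
    (θ : EuclideanSpace ℝ (Fin d)) :
    ∫ v, ‖(((d : ℝ) / μ) * (V (θ + μ • v) - V θ)) • v‖ ^ 2 ∂(sphereUniform d) ≤
      2 * d * ‖gradient V θ‖ ^ 2 + μ ^ 2 * L ^ 2 * d ^ 2 / 2 := by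
  classical
  set σ := (volume : Measure (EuclideanSpace ℝ (Fin d))).toSphere with hσdef
  set g := gradient V θ with hg
  -- total mass of the sphere measure
  have hσuniv : σ Set.univ = (d : ℝ≥0∞) * volume (Metric.ball (0:(EuclideanSpace ℝ (Fin d))) 1) := by
    have hfr : Module.finrank ℝ (EuclideanSpace ℝ (Fin d)) = d := finrank_euclideanSpace_fin
    rw [hσdef, Measure.toSphere_apply_univ, hfr]
  have hσ0 : σ Set.univ ≠ 0 := by
    rw [hσuniv]
    exact mul_ne_zero (by simpa using hd.ne') (measure_ball_pos _ _ one_pos).ne'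
  have hσtop : σ Set.univ ≠ ⊤ := by
    rw [hσuniv]
    exact ENNReal.mul_ne_top (by simp) measure_ball_lt_top.ne
  set M := (σ Set.univ).toReal with hM
  have hMpos : 0 < M := ENNReal.toReal_pos hσ0 hσtop
  -- the integrand
  set f : (EuclideanSpace ℝ (Fin d)) → ℝ := fun v => ‖(((d : ℝ) / μ) * (V (θ + μ • v) - V θ)) • v‖ ^ 2 with hf
  have hVc : Continuous V := hVdiff.continuous
  have hfcont : Continuous f := by
    rw [hf]; fun_prop
  -- rewrite the integral over sphereUniform
  have hrw : ∫ v, f v ∂(sphereUniform d) = M⁻¹ * ∫ v : Metric.sphere (0:(EuclideanSpace ℝ (Fin d))) 1, f (v : (EuclideanSpace ℝ (Fin d))) ∂σ := by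
    rw [sphereUniform, integral_smul_measure,
      integral_map measurable_subtype_coe.aemeasurable hfcont.aestronglyMeasurable]
    rw [ENNReal.toReal_inv]
    rfl
  set G : Metric.sphere (0:(EuclideanSpace ℝ (Fin d))) 1 → ℝ := fun v => f (v : (EuclideanSpace ℝ (Fin d))) with hG
  set H : Metric.sphere (0:(EuclideanSpace ℝ (Fin d))) 1 → ℝ :=
    fun v => 2 * d^2 * ⟪g, (v : (EuclideanSpace ℝ (Fin d)))⟫ ^ 2 + d^2 * L^2 * μ^2 / 2 with hH
  -- pointwise bound
  have hpt : ∀ v : Metric.sphere (0:(EuclideanSpace ℝ (Fin d))) 1, G v ≤ H v := by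
    intro v
    have hv : ‖(v : (EuclideanSpace ℝ (Fin d)))‖ = 1 := by simpa using v.2
    have hdesc := descent_lemma V hVdiff hL.le hVlip θ (θ + μ • (v : (EuclideanSpace ℝ (Fin d))))
    rw [add_sub_cancel_left] at hdesc
    have hnw : ‖μ • (v : (EuclideanSpace ℝ (Fin d)))‖ = μ := by
      rw [norm_smul, hv, mul_one, Real.norm_eq_abs, abs_of_pos hμ]
    rw [hnw, real_inner_smul_right] at hdesc
    set a := V (θ + μ • (v : (EuclideanSpace ℝ (Fin d)))) - V θ
    set t := ⟪g, (v : (EuclideanSpace ℝ (Fin d)))⟫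
    have hsq : a ^ 2 ≤ 2 * (μ * t)^2 + 2 * (L / 2 * μ^2)^2 := by
      clear_value a t
      have h' := abs_le.mp hdesc
      have h2 : (a - μ * t)^2 ≤ (L / 2 * μ^2)^2 := sq_le_sq' h'.1 h'.2
      have h3 : a^2 = 2*(μ*t)^2 + 2*(a-μ*t)^2 - (a-2*μ*t)^2 := by ring
      linarith [sq_nonneg (a - 2*μ*t), h2]
    have hGv : G v = ((d : ℝ)/μ)^2 * a^2 := by
      rw [hG, hf]
      dsimp only
      rw [norm_smul, hv, mul_one, Real.norm_eq_abs, sq_abs, mul_pow]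
    rw [hGv, hH]
    have hμ' : μ ≠ 0 := hμ.ne'
    have : ((d:ℝ)/μ)^2 * (2 * (μ * t)^2 + 2 * (L / 2 * μ^2)^2)
        = 2 * d^2 * t^2 + d^2 * L^2 * μ^2 / 2 := by
      field_simp
    calc ((d : ℝ)/μ)^2 * a^2 ≤ ((d:ℝ)/μ)^2 * (2 * (μ * t)^2 + 2 * (L / 2 * μ^2)^2) := by
          apply mul_le_mul_of_nonneg_left hsq (by positivity)
      _ = 2 * d^2 * t^2 + d^2 * L^2 * μ^2 / 2 := this
  -- integrability
  have hGint : Integrable G σ := by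
    have hGcont : Continuous G := hfcont.comp continuous_subtype_val
    exact hGcont.integrable_of_hasCompactSupport (isClosed_tsupport _).isCompact
  have hHint : Integrable H σ :=
    (((integrable_inner_sq g).const_mul (2 * (d:ℝ)^2)).add (integrable_const _))
  -- integrate
  have hIGH : ∫ v, G v ∂σ ≤ ∫ v, H v ∂σ := integral_mono hGint hHint hpt
  have hIH : ∫ v, H v ∂σ = 2 * d * ‖g‖^2 * M + (d^2 * L^2 * μ^2 / 2) * M := by
    rw [hH]
    rw [integral_add ((integrable_inner_sq g).const_mul (2 * (d:ℝ)^2)) (integrable_const _),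
      MeasureTheory.integral_const_mul, integral_inner_sq_value hd g, integral_const, smul_eq_mul]
    have hd' : (d:ℝ) ≠ 0 := by exact_mod_cast hd.ne'
    rw [measureReal_def, ← hM]
    field_simp
  rw [hrw]
  calc M⁻¹ * ∫ v : Metric.sphere (0:(EuclideanSpace ℝ (Fin d))) 1, f (v:(EuclideanSpace ℝ (Fin d))) ∂σ
      ≤ M⁻¹ * ∫ v, H v ∂σ := by
        apply mul_le_mul_of_nonneg_left _ (by positivity)
        exact hIGH
    _ = 2 * d * ‖g‖^2 + μ^2 * L^2 * d^2 / 2 := by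
        rw [hIH]
        field_simp
end
end
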